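/- Let k, n be integers with k > 0 and n ≥ k(2k−1), and set m = 2k − 1. Then the number of strict partitions of n with exactly m parts and BG-rank equal to k equals the number of partitions λ with largest part at most 2k − 1 and 2|λ| = n − k(2k−1). -/

import Mathlib

/-- The `i`-th entry (1-indexed) of a list of naturals, defaulting to `0`. -/
def entry (d : List ℕ) (i : ℕ) : ℕ := d.getD (i - 1) 0

/-- The alternating partial sum `∑_{i=1}^{m} (−1)^i d_i` of a list `d`. -/
def altSum (d : List ℕ) (m : ℕ) : ℤ :=
  ∑ i ∈ Finset.Icc 1 m, (-1 : ℤ) ^ i * (entry d i : ℤ)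

/-- `d = (d_1, …, d_l)` is an `(a,b)`-sequence: it is a list of positive integers with
`l ≥ b ≥ 1`, `d_i = a + i` for `1 ≤ i ≤ b`, `d_b ≥ d_{b+1} ≥ ⋯ ≥ d_l ≥ 1`, and
`∑_{i=1}^{l} (−1)^i d_i = 0`. -/
def IsABSeq (a b : ℕ) (d : List ℕ) : Prop :=
  1 ≤ b ∧ b ≤ d.length ∧
  (∀ i, 1 ≤ i → i ≤ d.length → 1 ≤ entry d i) ∧
  (∀ i, 1 ≤ i → i ≤ b → entry d i = a + i) ∧
  (∀ i j, b ≤ i → i ≤ j → j ≤ d.length → entry d j ≤ entry d i) ∧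
  altSum d d.length = 0

/-- An (ordinary) partition, recorded as a weakly decreasing list of positive parts. -/
def IsPartitionList (L : List ℕ) : Prop :=
  L.Pairwise (· ≥ ·) ∧ ∀ x ∈ L, 0 < x

/-- A strict partition: a strictly decreasing list of positive parts. -/
def IsStrictPartition (L : List ℕ) : Prop :=
  L.Pairwise (· > ·) ∧ ∀ x ∈ L, 0 < x

/-- The column sequence of the shifted Young diagram of a strict partition `L`:
`colSeq L j = #{ i : 1 ≤ i ≤ m, i ≤ j ≤ λ_i + i − 1 }`. -/
def colSeq (L : List ℕ) (j : ℕ) : ℕ :=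
  ((Finset.Icc 1 L.length).filter (fun i => i ≤ j ∧ j ≤ entry L i + i - 1)).card

/-- The BG-rank of a partition: the number of odd-indexed odd parts minus
the number of even-indexed odd parts (indices starting at 1). -/
def bgRank (L : List ℕ) : ℤ :=
  (((Finset.Icc 1 L.length).filter (fun i => Odd i ∧ Odd (entry L i))).card : ℤ) -
  (((Finset.Icc 1 L.length).filter (fun i => Even i ∧ Odd (entry L i))).card : ℤ)

/-- `qj j n`: the number of strict partitions of `n` whose BG-rank equals `j`. -/
noncomputable def qj (j : ℤ) (n : ℕ) : ℕ :=
  Set.ncard {L : List ℕ | IsStrictPartition L ∧ L.sum = n ∧ bgRank L = j}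

/-!
A strict partition `λ` with `2k − 1` parts has BG-rank at most `k`, the number of odd indices,
with equality exactly when `λ_i ≡ i (mod 2)` for every `i`. Since `λ_i + i` is weakly
decreasing and `λ_{2k−1} ≥ 1`, such `λ` are exactly the lists `λ_i = (2k − i) + 2ν_i` with
`ν_1 ≥ ⋯ ≥ ν_{2k−1} ≥ 0`, and `|λ| = k(2k − 1) + 2|ν|`. Conjugating `ν` gives the partitions with
parts at most `2k − 1`.
-/

open Finset

lemma entry_mem {L : List ℕ} {i : ℕ} (hi : 1 ≤ i) (hiL : i ≤ L.length) : entry L i ∈ L := by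
  rw [entry, List.getD_eq_getElem _ _ (by omega)]
  exact List.getElem_mem _

lemma entry_map_range (f : ℕ → ℕ) {n i : ℕ} (hi : 1 ≤ i) (hin : i ≤ n) :
    entry ((List.range n).map f) i = f (i - 1) := by
  rw [entry, List.getD_eq_getElem _ _ (by simp; omega)]
  simp

lemma ext_entry {L M : List ℕ} (hlen : L.length = M.length)
    (h : ∀ i, 1 ≤ i → i ≤ L.length → entry L i = entry M i) : L = M := by
  refine List.ext_getElem hlen fun i hiL hiM => ?_
  have := h (i + 1) (by omega) (by omega)
  rwa [entry, entry, Nat.add_sub_cancel, List.getD_eq_getElem _ _ hiL,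
    List.getD_eq_getElem _ _ hiM] at this

lemma entry_add_le_entry_add {L : List ℕ} (hL : L.Pairwise (· > ·)) {i j : ℕ} (hi : 1 ≤ i)
    (hij : i ≤ j) (hjL : j ≤ L.length) : entry L j + j ≤ entry L i + i := by
  induction j, hij using Nat.le_induction with
  | base => rfl
  | succ j hij ih =>
    have hstep : entry L (j + 1) < entry L j := by
      rw [entry, entry, List.getD_eq_getElem _ _ (by omega), List.getD_eq_getElem _ _ (by omega)]
      exact List.pairwise_iff_getElem.mp hL _ _ _ _ (by omega)
    have := ih (by omega)
    omega

lemma List.sum_map_range (f : ℕ → ℕ) (n : ℕ) :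
    ((List.range n).map f).sum = ∑ i ∈ Finset.range n, f i := by
  induction n with
  | zero => simp
  | succ n ih => simp [List.range_succ, Finset.sum_range_succ, ih]

lemma List.countP_range_lt (t n : ℕ) : (List.range n).countP (· < t) = min t n := by
  rw [← Nat.count, Nat.count_eq_card_filter_range, ← Finset.card_range (min t n)]
  congr 1
  ext j
  simp only [Finset.mem_filter, Finset.mem_range]
  omega

def conjPart (μ : List ℕ) (i : ℕ) : ℕ := μ.countP (i ≤ ·)

lemma conjPart_anti (μ : List ℕ) {i j : ℕ} (hij : i ≤ j) : conjPart μ j ≤ conjPart μ i :=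
  List.countP_mono_left fun x _ hx => by simp only [decide_eq_true_eq] at hx ⊢; omega

lemma conjPart_eq_zero {μ : List ℕ} {m i : ℕ} (hμ : ∀ x ∈ μ, x ≤ m) (hi : m < i) :
    conjPart μ i = 0 :=
  List.countP_eq_zero.mpr fun x hx => by have := hμ x hx; simp only [decide_eq_true_eq]; omega

lemma conjPart_eq_count_add (μ : List ℕ) (a : ℕ) :
    conjPart μ a = μ.count a + conjPart μ (a + 1) := by
  induction μ with
  | nil => simp [conjPart]
  | cons x μ ih =>
    simp only [conjPart, List.countP_cons, List.count_cons] at ih ⊢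
    rw [ih]
    split_ifs <;> simp_all <;> omega

lemma sum_conjPart {μ : List ℕ} {m : ℕ} (hμ : ∀ x ∈ μ, x ≤ m) :
    ∑ i ∈ range m, conjPart μ (i + 1) = μ.sum := by
  induction μ with
  | nil => simp [conjPart]
  | cons a μ ih =>
    have hrange : {i ∈ range m | i + 1 ≤ a} = range a := by
      ext i
      have := hμ a List.mem_cons_self
      simp only [mem_filter, mem_range]
      omega
    simp only [conjPart, List.countP_cons, List.sum_cons, decide_eq_true_eq] at ih ⊢
    rw [sum_add_distrib, ih fun x hx => hμ x (List.mem_cons_of_mem a hx), ← card_filter, hrange,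
      card_range, add_comm]

lemma eq_of_conjPart_eq {μ ν : List ℕ} (hμ : IsPartitionList μ) (hν : IsPartitionList ν)
    (h : ∀ i, 1 ≤ i → conjPart μ i = conjPart ν i) : μ = ν := by
  have hcount : ∀ a, μ.count a = ν.count a := by
    intro a
    rcases Nat.eq_zero_or_pos a with rfl | ha
    · rw [List.count_eq_zero.mpr fun h0 => (hμ.2 0 h0).false,
        List.count_eq_zero.mpr fun h0 => (hν.2 0 h0).false]
    · have hμa := conjPart_eq_count_add μ a
      have hνa := conjPart_eq_count_add ν a
      have := h a ha
      have := h (a + 1) (by omega)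
      omega
  exact List.Perm.eq_of_pairwise' hμ.1 hν.1 (List.perm_iff_count.mpr hcount)

/-- The conjugate of `(f 1, …, f m)`, a partition when `f` is antitone on `[1, m]`
(zero parts allowed). -/
def conjugate (m : ℕ) (f : ℕ → ℕ) : List ℕ :=
  (List.range (f 1)).map fun j => #{i ∈ Icc 1 m | j < f i}

lemma conjugate_le (m : ℕ) (f : ℕ → ℕ) : ∀ x ∈ conjugate m f, x ≤ m := by
  simp only [conjugate, List.mem_map, forall_exists_index, and_imp]
  rintro _ j - rfl
  simpa using card_filter_le (Icc 1 m) _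

section Antitone

variable {m : ℕ} {f : ℕ → ℕ}

lemma le_card_filter_lt_iff (hf : AntitoneOn f (Set.Icc 1 m)) {i j : ℕ} (hi : 1 ≤ i)
    (him : i ≤ m) : i ≤ #{i' ∈ Icc 1 m | j < f i'} ↔ j < f i := by
  constructor
  · intro hcard
    by_contra! hfi
    have hsub : {i' ∈ Icc 1 m | j < f i'} ⊆ Icc 1 (i - 1) := by
      intro i' hi'
      simp only [mem_filter, mem_Icc] at hi' ⊢
      by_contra! hii'
      have := hf ⟨hi, him⟩ ⟨hi'.1.1, hi'.1.2⟩ (by omega)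
      omega
    have := card_le_card hsub
    simp only [Nat.card_Icc] at this
    omega
  · intro hfi
    have hsub : Icc 1 i ⊆ {i' ∈ Icc 1 m | j < f i'} := by
      intro i' hi'
      simp only [mem_filter, mem_Icc] at hi' ⊢
      exact ⟨⟨hi'.1, by omega⟩, hfi.trans_le (hf ⟨hi'.1, by omega⟩ ⟨hi, him⟩ hi'.2)⟩
    simpa using card_le_card hsub

lemma conjPart_conjugate (hf : AntitoneOn f (Set.Icc 1 m)) {i : ℕ} (hi : 1 ≤ i) (him : i ≤ m) :
    conjPart (conjugate m f) i = f i := by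
  have hfi : f i ≤ f 1 := hf ⟨le_rfl, by omega⟩ ⟨hi, him⟩ hi
  rw [conjPart, conjugate, List.countP_map,
    List.countP_congr (q := (· < f i)) fun j _ => by
      simpa using le_card_filter_lt_iff hf hi him (j := j),
    List.countP_range_lt, min_eq_left hfi]

lemma isPartitionList_conjugate (hf : AntitoneOn f (Set.Icc 1 m)) (hm : 1 ≤ m) :
    IsPartitionList (conjugate m f) := by
  refine ⟨?_, ?_⟩
  · rw [conjugate, List.pairwise_map]
    refine List.pairwise_le_range.imp fun hab => card_le_card fun i hi => ?_
    simp only [mem_filter] at hi ⊢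
    exact ⟨hi.1, by omega⟩
  · simp only [conjugate, List.mem_map, List.mem_range, forall_exists_index, and_imp]
    rintro _ j hj rfl
    exact (le_card_filter_lt_iff hf le_rfl hm).mpr hj

end Antitone

lemma card_filter_odd_Icc (k : ℕ) : #{i ∈ Icc 1 (2 * k - 1) | Odd i} = k := by
  have hodd : {i ∈ Icc 1 (2 * k - 1) | Odd i} = (range k).image (2 * · + 1) := by
    ext i
    simp only [mem_filter, mem_Icc, mem_image, mem_range, Nat.odd_iff]
    constructor
    · rintro ⟨⟨hi1, hik⟩, hodd⟩
      exact ⟨i / 2, by omega, by omega⟩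
    · rintro ⟨j, hj, rfl⟩
      omega
  rw [hodd, card_image_of_injective _ fun a b hab => by simpa using hab, card_range]

lemma bgRank_eq_iff {L : List ℕ} {k : ℕ} (hlen : L.length = 2 * k - 1) :
    bgRank L = k ↔ ∀ i, 1 ≤ i → i ≤ 2 * k - 1 → Even (entry L i + i) := by
  rw [bgRank, hlen]
  set I := Icc 1 (2 * k - 1)
  have hsub : {i ∈ I | Odd i ∧ Odd (entry L i)} ⊆ {i ∈ I | Odd i} := fun i hi => by
    simp only [mem_filter] at hi ⊢
    exact ⟨hi.1, hi.2.1⟩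
  constructor
  · intro hbg i hi1 hik
    have hcard := card_le_card hsub
    rw [card_filter_odd_Icc] at hcard
    have hodd : {i ∈ I | Odd i ∧ Odd (entry L i)} = {i ∈ I | Odd i} :=
      eq_of_subset_of_card_le hsub (by rw [card_filter_odd_Icc]; omega)
    have heven : {i ∈ I | Even i ∧ Odd (entry L i)} = ∅ := card_eq_zero.mp (by omega)
    have hiI : i ∈ I := mem_Icc.mpr ⟨hi1, hik⟩
    rw [Nat.even_add]
    rcases Nat.even_or_odd i with hi | hi
    · have : i ∉ {i ∈ I | Even i ∧ Odd (entry L i)} := by simp [heven]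
      simpa [hiI, hi] using this
    · have : i ∈ {i ∈ I | Odd i ∧ Odd (entry L i)} := by rw [hodd]; simp [hiI, hi]
      simp only [mem_filter] at this
      simp [Nat.not_even_iff_odd.mpr this.2.2, Nat.not_even_iff_odd.mpr hi]
  · intro hpar
    have hodd : {i ∈ I | Odd i ∧ Odd (entry L i)} = {i ∈ I | Odd i} :=
      filter_congr fun i hi => by
        have := hpar i (mem_Icc.mp hi).1 (mem_Icc.mp hi).2
        rw [Nat.even_add] at this
        rw [← Nat.not_even_iff_odd, ← Nat.not_even_iff_odd, this, and_self]
    have heven : {i ∈ I | Even i ∧ Odd (entry L i)} = ∅ :=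
      filter_eq_empty_iff.mpr fun i hi => by
        have := hpar i (mem_Icc.mp hi).1 (mem_Icc.mp hi).2
        rw [Nat.even_add] at this
        rw [← Nat.not_even_iff_odd, this]
        tauto
    simp [hodd, heven, I, card_filter_odd_Icc]

section Staircase

/-- `λ_i = (2k − i) + 2μ'_i`, where `μ'` is the conjugate of `μ`. -/
def staircase (k : ℕ) (μ : List ℕ) : List ℕ :=
  (List.range (2 * k - 1)).map fun i => 2 * k - (i + 1) + 2 * conjPart μ (i + 1)

variable {k : ℕ}

@[simp]
lemma length_staircase (k : ℕ) (μ : List ℕ) : (staircase k μ).length = 2 * k - 1 := by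
  simp [staircase]

lemma entry_staircase (μ : List ℕ) {i : ℕ} (hi : 1 ≤ i) (hik : i ≤ 2 * k - 1) :
    entry (staircase k μ) i = 2 * k - i + 2 * conjPart μ i := by
  rw [staircase, entry_map_range _ hi hik, Nat.sub_add_cancel hi]

lemma isStrictPartition_staircase (k : ℕ) (μ : List ℕ) : IsStrictPartition (staircase k μ) := by
  refine ⟨?_, ?_⟩
  · rw [staircase, List.pairwise_map]
    refine List.pairwise_lt_range.imp_of_mem fun {a b} _ hb hab => ?_
    have := conjPart_anti μ (show a + 1 ≤ b + 1 by omega)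
    rw [List.mem_range] at hb
    omega
  · simp only [staircase, List.mem_map, List.mem_range, forall_exists_index, and_imp]
    rintro _ i hi rfl
    omega

lemma bgRank_staircase (k : ℕ) (μ : List ℕ) : bgRank (staircase k μ) = k :=
  (bgRank_eq_iff (length_staircase k μ)).mpr fun i hi hik => by
    rw [entry_staircase μ hi hik, Nat.even_iff]
    omega

lemma sum_staircase {μ : List ℕ} (hμ : ∀ x ∈ μ, x ≤ 2 * k - 1) :
    (staircase k μ).sum = k * (2 * k - 1) + 2 * μ.sum := by
  have hstair : ∑ i ∈ range (2 * k - 1), (2 * k - (i + 1)) = k * (2 * k - 1) := by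
    rw [← sum_range_reflect]
    have hgauss := sum_range_id_mul_two (2 * k - 1 + 1)
    rw [sum_range_succ'] at hgauss
    rw [sum_congr rfl fun i hi => show 2 * k - (2 * k - 1 - 1 - i + 1) = i + 1 by
      rw [mem_range] at hi; omega]
    rcases k with _ | k
    · simp
    · rw [show 2 * (k + 1) - 1 = 2 * k + 1 by omega] at hgauss ⊢
      simp only [add_zero, Nat.add_sub_cancel] at hgauss
      linarith
  rw [staircase, List.sum_map_range, sum_add_distrib, ← mul_sum, sum_conjPart hμ, hstair]

lemma staircase_injective {μ ν : List ℕ} (hμ : IsPartitionList μ) (hμk : ∀ x ∈ μ, x ≤ 2 * k - 1)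
    (hν : IsPartitionList ν) (hνk : ∀ x ∈ ν, x ≤ 2 * k - 1)
    (h : staircase k μ = staircase k ν) : μ = ν := by
  refine eq_of_conjPart_eq hμ hν fun i hi => ?_
  by_cases hik : i ≤ 2 * k - 1
  · have := congrArg (entry · i) h
    simp only [entry_staircase _ hi hik] at this
    omega
  · rw [conjPart_eq_zero hμk (by omega), conjPart_eq_zero hνk (by omega)]

lemma exists_staircase_eq (hk : 0 < k) {L : List ℕ} (hL : IsStrictPartition L)
    (hlen : L.length = 2 * k - 1) (hbg : bgRank L = k) :
    ∃ μ, IsPartitionList μ ∧ (∀ x ∈ μ, x ≤ 2 * k - 1) ∧ staircase k μ = L := by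
  have hlow : ∀ i, 1 ≤ i → i ≤ 2 * k - 1 → 2 * k ≤ entry L i + i := fun i hi hik => by
    have := entry_add_le_entry_add hL.1 hi hik hlen.ge
    have := hL.2 _ (entry_mem (L := L) (i := 2 * k - 1) (by omega) hlen.ge)
    omega
  have hanti : AntitoneOn (fun i => (entry L i + i - 2 * k) / 2) (Set.Icc 1 (2 * k - 1)) :=
    fun i hi j hj hij => Nat.div_le_div_right (Nat.sub_le_sub_right
      (entry_add_le_entry_add hL.1 hi.1 hij (hlen ▸ hj.2)) _)
  refine ⟨_, isPartitionList_conjugate hanti (by omega), conjugate_le _ _, ?_⟩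
  refine ext_entry (by simp [hlen]) fun i hi hik => ?_
  simp only [length_staircase] at hik
  have hpar := (bgRank_eq_iff hlen).mp hbg i hi hik
  rw [entry_staircase _ hi hik, conjPart_conjugate hanti hi hik]
  have := hlow i hi hik
  rw [Nat.even_iff] at hpar
  omega

end Staircase

/-- Theorem 3.4(2): for `k > 0`, `n ≥ k(2k−1)`, and `m = 2k − 1`, the number of strict
partitions of `n` with exactly `m` parts and BG-rank `k` equals the number of partitions
with largest part at most `2k − 1` and `2|λ| = n − k(2k−1)`. -/
theorem strict_bg_count_case2 (k n : ℕ) (hk : 0 < k) (hn : k * (2 * k - 1) ≤ n) :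
    Set.ncard {L : List ℕ | IsStrictPartition L ∧ L.length = 2 * k - 1 ∧ L.sum = n ∧
      bgRank L = (k : ℤ)} =
    Set.ncard {μ : List ℕ | IsPartitionList μ ∧ (∀ x ∈ μ, x ≤ 2 * k - 1) ∧
      2 * μ.sum = n - k * (2 * k - 1)} := by
  have himage : {L : List ℕ | IsStrictPartition L ∧ L.length = 2 * k - 1 ∧ L.sum = n ∧
      bgRank L = (k : ℤ)} = staircase k '' {μ : List ℕ | IsPartitionList μ ∧
        (∀ x ∈ μ, x ≤ 2 * k - 1) ∧ 2 * μ.sum = n - k * (2 * k - 1)} := by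
    ext L
    constructor
    · rintro ⟨hL, hlen, hsum, hbg⟩
      obtain ⟨μ, hμ, hμk, rfl⟩ := exists_staircase_eq hk hL hlen hbg
      rw [sum_staircase hμk] at hsum
      exact ⟨μ, ⟨hμ, hμk, by omega⟩, rfl⟩
    · rintro ⟨μ, ⟨hμ, hμk, hsum⟩, rfl⟩
      exact ⟨isStrictPartition_staircase k μ, length_staircase k μ,
        by rw [sum_staircase hμk]; omega, bgRank_staircase k μ⟩
  rw [himage, Set.InjOn.ncard_image fun μ hμ ν hν =>
    staircase_injective hμ.1 hμ.2.1 hν.1 hν.2.1]
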